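/- arXiv:1409.4613 — 3 statements merged into one kernel-verified Lean document; each statement's English description precedes it below -/
import Mathlib

section
/- If two monotonic paths γ₁ and γ₂ in the rectangle D both connect a point on the bottom side B to a point on the top side T, and the bottom endpoint of γ₁ lies weakly to the left of that of γ₂ while the top endpoint of γ₁ lies weakly to the right of that of γ₂, then γ₁ and γ₂ intersect in at least one point. -/
open Set

/-- A monotonic path in a free space `S`: a connected subset of `S` such that
`(u - u')*(v - v') ≥ 0` for any two of its points. -/
def MonotonicPath (S γ : Set (ℝ × ℝ)) : Prop :=
  γ ⊆ S ∧ IsConnected γ ∧ ∀ p ∈ γ, ∀ q ∈ γ, (p.1 - q.1) * (p.2 - q.2) ≥ 0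

/-- Two points are mutually reachable if some monotonic path contains both. -/
def MutuallyReachable (S : Set (ℝ × ℝ)) (p q : ℝ × ℝ) : Prop :=
  ∃ γ : Set (ℝ × ℝ), MonotonicPath S γ ∧ p ∈ γ ∧ q ∈ γ

/-
Split `γ₁` according to whether a point lies weakly left or weakly right of the
point of `γ₂` at the same height (there is one, since the heights of `γ₂` fill `[0, n]`). Both
parts are closed because `γ₂` is compact, and the endpoint hypotheses put the bottom of `γ₁` in
the left part and its top in the right part, so by connectedness some `p ∈ γ₁` lies in both.
A horizontal slice of a monotonic path is an interval, hence `p ∈ γ₂`.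
-/

theorem IsCompact.isClosed_setOf_exists_mem {X Y : Type*} [TopologicalSpace X]
    [TopologicalSpace Y] {K : Set Y} (hK : IsCompact K) {R : X → Y → Prop}
    (hR : IsClosed {z : X × Y | R z.1 z.2}) : IsClosed {x | ∃ y ∈ K, R x y} := by
  have : CompactSpace K := isCompact_iff_compactSpace.mp hK
  have hclosed : IsClosed {z : X × K | R z.1 z.2} :=
    hR.preimage (continuous_fst.prodMk (continuous_subtype_val.comp continuous_snd))
  convert isClosedMap_fst_of_compactSpace _ hclosed using 1
  ext x
  simp

namespace MonotonicPath

variable {S γ : Set (ℝ × ℝ)}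

theorem ordConnected_slice (hγ : MonotonicPath S γ) (t : ℝ) :
    OrdConnected {x | (x, t) ∈ γ} := by
  refine ⟨fun x hx y hy z ⟨hxz, hzy⟩ => ?_⟩
  rcases hxz.eq_or_lt with rfl | hxz
  · exact hx
  rcases hzy.eq_or_lt with rfl | hzy
  · exact hy
  obtain ⟨r, hr, hrz⟩ := (hγ.2.1.isPreconnected.image _ continuous_fst.continuousOn).Icc_subset
    ⟨_, hx, rfl⟩ ⟨_, hy, rfl⟩ ⟨hxz.le, hzy.le⟩
  -- monotonicity puts `r` weakly above `(x, t)` and weakly below `(y, t)`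
  have hx' := hγ.2.2 r hr _ hx
  have hy' := hγ.2.2 r hr _ hy
  obtain rfl : r = (z, t) := Prod.ext hrz (by dsimp at hx' hy' hrz; nlinarith)
  exact hr

end MonotonicPath

theorem crossing_monotonic_paths_intersect_general (m n : ℝ)
    (γ₁ γ₂ : Set (ℝ × ℝ)) (a₁ b₁ a₂ b₂ : ℝ)
    (h1 : MonotonicPath (Icc ((0 : ℝ), (0 : ℝ)) (2 * m, n)) γ₁)
    (h2 : MonotonicPath (Icc ((0 : ℝ), (0 : ℝ)) (2 * m, n)) γ₂) (h2c : IsCompact γ₂)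
    (e1 : (a₁, (0 : ℝ)) ∈ γ₁) (e2 : (b₁, n) ∈ γ₁)
    (e3 : (a₂, (0 : ℝ)) ∈ γ₂) (e4 : (b₂, n) ∈ γ₂)
    (hbot : a₁ ≤ a₂) (htop : b₂ ≤ b₁) :
    (γ₁ ∩ γ₂).Nonempty := by
  set L := {p : ℝ × ℝ | ∃ q ∈ γ₂, p.2 = q.2 ∧ p.1 ≤ q.1}
  set R := {p : ℝ × ℝ | ∃ q ∈ γ₂, p.2 = q.2 ∧ q.1 ≤ p.1}
  have hL : IsClosed L := h2c.isClosed_setOf_exists_mem <|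
    (isClosed_eq continuous_fst.snd continuous_snd.snd).inter
      (isClosed_le continuous_fst.fst continuous_snd.fst)
  have hR : IsClosed R := h2c.isClosed_setOf_exists_mem <|
    (isClosed_eq continuous_fst.snd continuous_snd.snd).inter
      (isClosed_le continuous_snd.fst continuous_fst.fst)
  have hcover : γ₁ ⊆ L ∪ R := by
    intro p hp
    have hheight : p.2 ∈ Icc 0 n := ⟨(h1.1 hp).1.2, (h1.1 hp).2.2⟩
    obtain ⟨q, hq, hqp⟩ := (h2.2.1.isPreconnected.image _ continuous_snd.continuousOn).Icc_subset
      ⟨_, e3, rfl⟩ ⟨_, e4, rfl⟩ hheight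
    exact (le_total p.1 q.1).imp (fun h => ⟨q, hq, hqp.symm, h⟩) (fun h => ⟨q, hq, hqp.symm, h⟩)
  obtain ⟨p, hp, ⟨q, hq, hpq, hle⟩, ⟨q', hq', hpq', hge⟩⟩ :=
    isPreconnected_closed_iff.mp h1.2.1.isPreconnected L R hL hR hcover
      ⟨_, e1, _, e3, rfl, hbot⟩ ⟨_, e2, _, e4, rfl, htop⟩
  have hslice := (h2.ordConnected_slice p.2).out (x := q'.1) (by simpa [hpq'] using hq')
    (y := q.1) (by simpa [hpq] using hq) ⟨hge, hle⟩
  exact ⟨p, hp, by simpa using hslice⟩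

/-- Two monotonic paths crossing the rectangle `D` from bottom to top, whose
endpoints are oppositely ordered, intersect. -/
theorem crossing_monotonic_paths_intersect (m n : ℝ) (hm : 0 ≤ m) (hn : 0 ≤ n)
    (γ₁ γ₂ : Set (ℝ × ℝ)) (a₁ b₁ a₂ b₂ : ℝ)
    (h1 : MonotonicPath (Icc ((0 : ℝ), (0 : ℝ)) (2 * m, n)) γ₁) (h1c : IsCompact γ₁)
    (h2 : MonotonicPath (Icc ((0 : ℝ), (0 : ℝ)) (2 * m, n)) γ₂) (h2c : IsCompact γ₂)
    (e1 : (a₁, (0 : ℝ)) ∈ γ₁) (e2 : (b₁, n) ∈ γ₁)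
    (e3 : (a₂, (0 : ℝ)) ∈ γ₂) (e4 : (b₂, n) ∈ γ₂)
    (hbot : a₁ ≤ a₂) (htop : b₂ ≤ b₁) :
    (γ₁ ∩ γ₂).Nonempty :=
  crossing_monotonic_paths_intersect_general m n γ₁ γ₂ a₁ b₁ a₂ b₂ h1 h2 h2c e1 e2 e3 e4 hbot htop
end

section
/- (Mutual reachability criterion between top and bottom.) A point (u_top, n) on the top side T and a point (u_bot, 0) on the bottom side B are mutually reachable if and only if: (u_top, n) is reachable from the bottom, (u_bot, 0) is reachable from the top, u_top ≤ r↑(u_bot, 0), and u_bot ≤ r↓(u_top, n). -/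
open Set

/-! Monotonic paths are exactly the connected chains of `ℝ × ℝ` for the product order. A path
from `(u_top, n)` down to `(r↓, 0)` and a path from `(u_bot, 0)` up to `(r↑, n)` cross, since
`u_bot ≤ r↓` and `u_top ≤ r↑`: parametrising each chain by the coordinate sum `u + v`, which makes
the first coordinate 1-Lipschitz, the intermediate value theorem gives a common point `z`. The
first path above `z` followed by the second below `z` is then a monotonic path from `(u_top, n)`
to `(u_bot, 0)`; each piece is connected, being the image of its path under the continuous
retraction `x ↦ x ⊔ z`, resp. `x ↦ x ⊓ z`. -/

open Function

instance Prod.instContinuousSup {α β : Type*} [TopologicalSpace α] [TopologicalSpace β]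
    [Max α] [Max β] [ContinuousSup α] [ContinuousSup β] : ContinuousSup (α × β) :=
  ⟨(continuous_fst.fst.sup continuous_snd.fst).prodMk (continuous_fst.snd.sup continuous_snd.snd)⟩

instance Prod.instContinuousInf {α β : Type*} [TopologicalSpace α] [TopologicalSpace β]
    [Min α] [Min β] [ContinuousInf α] [ContinuousInf β] : ContinuousInf (α × β) :=
  ⟨(continuous_fst.fst.inf continuous_snd.fst).prodMk (continuous_fst.snd.inf continuous_snd.snd)⟩

section Lattice

variable {α : Type*} {γ : Set α} {z : α}

theorem IsChain.image_sup_const [SemilatticeSup α] (hc : IsChain (· ≤ ·) γ) (hz : z ∈ γ) :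
    (· ⊔ z) '' γ = γ ∩ Ici z := by
  ext x
  constructor
  · rintro ⟨y, hy, rfl⟩
    change y ⊔ z ∈ γ ∩ Ici z
    rcases hc.total hy hz with h | h
    · rw [show y ⊔ z = z from sup_eq_right.2 h]
      exact ⟨hz, le_rfl⟩
    · rw [show y ⊔ z = y from sup_eq_left.2 h]
      exact ⟨hy, h⟩
  · rintro ⟨hx, hzx⟩
    exact ⟨x, hx, sup_eq_left.2 hzx⟩

theorem IsChain.image_inf_const [SemilatticeInf α] (hc : IsChain (· ≤ ·) γ) (hz : z ∈ γ) :
    (· ⊓ z) '' γ = γ ∩ Iic z := by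
  ext x
  constructor
  · rintro ⟨y, hy, rfl⟩
    change y ⊓ z ∈ γ ∩ Iic z
    rcases hc.total hy hz with h | h
    · rw [show y ⊓ z = y from inf_eq_left.2 h]
      exact ⟨hy, h⟩
    · rw [show y ⊓ z = z from inf_eq_right.2 h]
      exact ⟨hz, le_rfl⟩
  · rintro ⟨hx, hxz⟩
    exact ⟨x, hx, inf_eq_left.2 hxz⟩

theorem IsPreconnected.inter_Ici_of_isChain [TopologicalSpace α] [SemilatticeSup α]
    [ContinuousSup α] (hγ : IsPreconnected γ) (hc : IsChain (· ≤ ·) γ) (hz : z ∈ γ) :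
    IsPreconnected (γ ∩ Ici z) :=
  hc.image_sup_const hz ▸ hγ.image _ (continuous_id.sup continuous_const).continuousOn

theorem IsPreconnected.inter_Iic_of_isChain [TopologicalSpace α] [SemilatticeInf α]
    [ContinuousInf α] (hγ : IsPreconnected γ) (hc : IsChain (· ≤ ·) γ) (hz : z ∈ γ) :
    IsPreconnected (γ ∩ Iic z) :=
  hc.image_inf_const hz ▸ hγ.image _ (continuous_id.inf continuous_const).continuousOn

end Lattice

section Plane

variable {γ γ₁ γ₂ : Set (ℝ × ℝ)}

theorem mul_sub_nonneg_iff_le_or_le (p q : ℝ × ℝ) :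
    0 ≤ (p.1 - q.1) * (p.2 - q.2) ↔ q ≤ p ∨ p ≤ q := by
  simp only [mul_nonneg_iff, sub_nonneg, sub_nonpos, Prod.le_def]

theorem forall_mul_sub_nonneg_iff_isChain :
    (∀ p ∈ γ, ∀ q ∈ γ, (p.1 - q.1) * (p.2 - q.2) ≥ 0) ↔ IsChain (· ≤ ·) γ := by
  refine ⟨fun h p hp q hq _ => ((mul_sub_nonneg_iff_le_or_le p q).1 (h p hp q hq)).symm,
    fun h p hp q hq => ?_⟩
  exact (mul_sub_nonneg_iff_le_or_le p q).2 (h.total hq hp)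

theorem monotonicPath_iff {S : Set (ℝ × ℝ)} :
    MonotonicPath S γ ↔ γ ⊆ S ∧ IsConnected γ ∧ IsChain (· ≤ ·) γ := by
  rw [MonotonicPath, forall_mul_sub_nonneg_iff_isChain]

theorem IsChain.le_of_fst_add_snd_le (hc : IsChain (· ≤ ·) γ) {x y : ℝ × ℝ} (hx : x ∈ γ)
    (hy : y ∈ γ) (h : x.1 + x.2 ≤ y.1 + y.2) : x ≤ y := by
  rcases hc.total hx hy with hxy | ⟨hyx₁, hyx₂⟩
  · exact hxy
  · exact ⟨by linarith, by linarith⟩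

theorem IsChain.injOn_fst_add_snd (hc : IsChain (· ≤ ·) γ) :
    InjOn (fun x : ℝ × ℝ => x.1 + x.2) γ := fun _ hx _ hy h =>
  le_antisymm (hc.le_of_fst_add_snd_le hx hy h.le) (hc.le_of_fst_add_snd_le hy hx h.ge)

theorem abs_fst_sub_le_of_le_or_le {x y : ℝ × ℝ} (h : x ≤ y ∨ y ≤ x) :
    |x.1 - y.1| ≤ |x.1 + x.2 - (y.1 + y.2)| := by
  rcases h with ⟨h₁, h₂⟩ | ⟨h₁, h₂⟩
  · rw [abs_of_nonpos (by linarith), abs_of_nonpos (by linarith)]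
    linarith
  · rw [abs_of_nonneg (by linarith), abs_of_nonneg (by linarith)]
    linarith

theorem IsChain.lipschitzOnWith_fst_invFunOn (hc : IsChain (· ≤ ·) γ) :
    LipschitzOnWith 1 (fun s => (invFunOn (fun x : ℝ × ℝ => x.1 + x.2) γ s).1)
      ((fun x : ℝ × ℝ => x.1 + x.2) '' γ) := by
  refine LipschitzOnWith.of_dist_le_mul fun s hs t ht => ?_
  have hs' := invFunOn_eq (f := fun x : ℝ × ℝ => x.1 + x.2) hs
  have ht' := invFunOn_eq (f := fun x : ℝ × ℝ => x.1 + x.2) ht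
  rw [NNReal.coe_one, one_mul, Real.dist_eq, Real.dist_eq]
  conv_rhs => rw [← hs', ← ht']
  exact abs_fst_sub_le_of_le_or_le (hc.total (invFunOn_mem hs) (invFunOn_mem ht))

theorem exists_mem_inter_of_crossing (hγ₁ : IsPreconnected γ₁) (hc₁ : IsChain (· ≤ ·) γ₁)
    (hγ₂ : IsPreconnected γ₂) (hc₂ : IsChain (· ≤ ·) γ₂) {x₁ y₁ x₂ y₂ : ℝ × ℝ}
    (hx₁ : x₁ ∈ γ₁) (hy₁ : y₁ ∈ γ₁) (hx₂ : x₂ ∈ γ₂) (hy₂ : y₂ ∈ γ₂)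
    (hx : x₁.1 + x₁.2 = x₂.1 + x₂.2) (hy : y₁.1 + y₁.2 = y₂.1 + y₂.2)
    (hx₂₁ : x₂.1 ≤ x₁.1) (hy₁₂ : y₁.1 ≤ y₂.1) :
    ∃ z ∈ γ₁ ∩ γ₂, z.1 + z.2 ∈ uIcc (x₁.1 + x₁.2) (y₁.1 + y₁.2) := by
  -- `invFunOn σ γ` parametrises the chain `γ` by the coordinate sum
  set σ : ℝ × ℝ → ℝ := fun x => x.1 + x.2
  have hσ : Continuous σ := by fun_prop
  have hI₁ : uIcc (σ x₁) (σ y₁) ⊆ σ '' γ₁ :=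
    (hγ₁.image σ hσ.continuousOn).ordConnected.uIcc_subset
      (mem_image_of_mem σ hx₁) (mem_image_of_mem σ hy₁)
  have hI₂ : uIcc (σ x₁) (σ y₁) ⊆ σ '' γ₂ :=
    (hγ₂.image σ hσ.continuousOn).ordConnected.uIcc_subset
      (by rw [show σ x₁ = σ x₂ from hx]; exact mem_image_of_mem σ hx₂)
      (by rw [show σ y₁ = σ y₂ from hy]; exact mem_image_of_mem σ hy₂)
  set g := fun s => (invFunOn σ γ₁ s).1 - (invFunOn σ γ₂ s).1
  have hg : ContinuousOn g (uIcc (σ x₁) (σ y₁)) :=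
    (hc₁.lipschitzOnWith_fst_invFunOn.continuousOn.mono hI₁).sub
      (hc₂.lipschitzOnWith_fst_invFunOn.continuousOn.mono hI₂)
  have hgx : g (σ x₁) = x₁.1 - x₂.1 := by
    have h₁ : invFunOn σ γ₁ (σ x₁) = x₁ := hc₁.injOn_fst_add_snd.leftInvOn_invFunOn hx₁
    have h₂ : invFunOn σ γ₂ (σ x₂) = x₂ := hc₂.injOn_fst_add_snd.leftInvOn_invFunOn hx₂
    simp only [g, h₁]
    rw [show σ x₁ = σ x₂ from hx, h₂]
  have hgy : g (σ y₁) = y₁.1 - y₂.1 := by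
    have h₁ : invFunOn σ γ₁ (σ y₁) = y₁ := hc₁.injOn_fst_add_snd.leftInvOn_invFunOn hy₁
    have h₂ : invFunOn σ γ₂ (σ y₂) = y₂ := hc₂.injOn_fst_add_snd.leftInvOn_invFunOn hy₂
    simp only [g, h₁]
    rw [show σ y₁ = σ y₂ from hy, h₂]
  obtain ⟨r, hr, hgr⟩ := intermediate_value_uIcc hg
    (show (0 : ℝ) ∈ uIcc (g (σ x₁)) (g (σ y₁)) by
      rw [hgx, hgy, mem_uIcc]
      exact Or.inr ⟨by linarith, by linarith⟩)
  obtain ⟨hw₁, hσw₁⟩ : invFunOn σ γ₁ r ∈ γ₁ ∧ σ (invFunOn σ γ₁ r) = r :=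
    ⟨invFunOn_mem (hI₁ hr), invFunOn_eq (hI₁ hr)⟩
  obtain ⟨hw₂, hσw₂⟩ : invFunOn σ γ₂ r ∈ γ₂ ∧ σ (invFunOn σ γ₂ r) = r :=
    ⟨invFunOn_mem (hI₂ hr), invFunOn_eq (hI₂ hr)⟩
  have hw : invFunOn σ γ₁ r = invFunOn σ γ₂ r := by
    have hfst := sub_eq_zero.1 hgr
    simp only [σ] at hσw₁ hσw₂
    exact Prod.ext hfst (by linarith)
  refine ⟨_, ⟨hw₁, hw ▸ hw₂⟩, ?_⟩
  change σ (invFunOn σ γ₁ r) ∈ uIcc (σ x₁) (σ y₁)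
  rwa [hσw₁]

theorem IsPreconnected.mk_mem_of_isChain (hγ : IsPreconnected γ) (hc : IsChain (· ≤ ·) γ)
    {a b c v : ℝ} (ha : (a, v) ∈ γ) (hb : (b, v) ∈ γ) (hac : a ≤ c) (hcb : c ≤ b) :
    (c, v) ∈ γ := by
  obtain ⟨w, hw, hσw : w.1 + w.2 = c + v⟩ := hγ.intermediate_value ha hb
    (f := fun x : ℝ × ℝ => x.1 + x.2) (by fun_prop)
    (show c + v ∈ Icc (a + v) (b + v) from ⟨by linarith, by linarith⟩)
  have haw := hc.le_of_fst_add_snd_le ha hw (by simp only; linarith)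
  have hwb := hc.le_of_fst_add_snd_le hw hb (by simp only; linarith)
  have hw₂ : w.2 = v := le_antisymm hwb.2 haw.2
  have hwc : w = (c, v) := Prod.ext (by linarith) hw₂
  exact hwc ▸ hw

end Plane

namespace MutuallyReachable

variable {S : Set (ℝ × ℝ)}

theorem symm {p q : ℝ × ℝ} (h : MutuallyReachable S p q) : MutuallyReachable S q p :=
  let ⟨γ, hγ, hp, hq⟩ := h
  ⟨γ, hγ, hq, hp⟩

theorem of_le_of_le {γ₁ γ₂ : Set (ℝ × ℝ)} (h₁ : MonotonicPath S γ₁) (h₂ : MonotonicPath S γ₂)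
    {p q z : ℝ × ℝ} (hz₁ : z ∈ γ₁) (hz₂ : z ∈ γ₂) (hp : p ∈ γ₁) (hq : q ∈ γ₂)
    (hpz : p ≤ z) (hzq : z ≤ q) : MutuallyReachable S p q := by
  rw [monotonicPath_iff] at h₁ h₂
  obtain ⟨hS₁, hγ₁, hc₁⟩ := h₁
  obtain ⟨hS₂, hγ₂, hc₂⟩ := h₂
  refine ⟨γ₁ ∩ Iic z ∪ γ₂ ∩ Ici z, monotonicPath_iff.2 ⟨?_, ?_, ?_⟩,
    Or.inl ⟨hp, hpz⟩, Or.inr ⟨hq, hzq⟩⟩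
  · exact union_subset (inter_subset_left.trans hS₁) (inter_subset_left.trans hS₂)
  · have hz₁' : z ∈ γ₁ ∩ Iic z := ⟨hz₁, mem_Iic.2 le_rfl⟩
    exact ⟨⟨z, Or.inl hz₁'⟩, IsPreconnected.union z hz₁' ⟨hz₂, mem_Ici.2 le_rfl⟩
      (hγ₁.isPreconnected.inter_Iic_of_isChain hc₁ hz₁)
      (hγ₂.isPreconnected.inter_Ici_of_isChain hc₂ hz₂)⟩
  · rintro x (⟨hx, hxz⟩ | ⟨hx, hzx⟩) y (⟨hy, hyz⟩ | ⟨hy, hzy⟩) hxy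
    · exact hc₁ hx hy hxy
    · exact Or.inl (hxz.trans hzy)
    · exact Or.inr (hyz.trans hzx)
    · exact hc₂ hx hy hxy

theorem of_crossing_of_lt {a b c d v₀ v₁ : ℝ} (hv : v₀ < v₁)
    (h₁ : MutuallyReachable S (a, v₁) (b, v₀)) (h₂ : MutuallyReachable S (c, v₀) (d, v₁))
    (hcb : c ≤ b) (had : a ≤ d) : MutuallyReachable S (a, v₁) (c, v₀) := by
  obtain ⟨γ₁, hγ₁, ha₁, hb₁⟩ := h₁
  obtain ⟨γ₂, hγ₂, hc₂, hd₂⟩ := h₂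
  obtain ⟨-, hconn₁, hchain₁⟩ := monotonicPath_iff.1 hγ₁
  obtain ⟨-, hconn₂, hchain₂⟩ := monotonicPath_iff.1 hγ₂
  have hba : b ≤ a := by
    rcases hchain₁.total ha₁ hb₁ with h | h
    · exact absurd h.2 (not_le.2 hv)
    · exact h.1
  have hcd : c ≤ d := by
    rcases hchain₂.total hc₂ hd₂ with h | h
    · exact h.1
    · exact absurd h.2 (not_le.2 hv)
  have hσ : ContinuousOn (fun x : ℝ × ℝ => x.1 + x.2) γ₂ := by fun_prop
  -- the points of `γ₂` on the antidiagonals through `(b, v₀)` and `(a, v₁)`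
  obtain ⟨x, hx, hσx : x.1 + x.2 = b + v₀⟩ := hconn₂.isPreconnected.intermediate_value hc₂ hd₂ hσ
    (show b + v₀ ∈ Icc (c + v₀) (d + v₁) from ⟨by linarith, by linarith⟩)
  obtain ⟨y, hy, hσy : y.1 + y.2 = a + v₁⟩ := hconn₂.isPreconnected.intermediate_value hc₂ hd₂ hσ
    (show a + v₁ ∈ Icc (c + v₀) (d + v₁) from ⟨by linarith, by linarith⟩)
  have hcx : (c, v₀) ≤ x := hchain₂.le_of_fst_add_snd_le hc₂ hx (by simp only; linarith)
  have hyd : y ≤ (d, v₁) := hchain₂.le_of_fst_add_snd_le hy hd₂ (by simp only; linarith)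
  obtain ⟨z, ⟨hz₁, hz₂⟩, hσz⟩ := exists_mem_inter_of_crossing hconn₁.isPreconnected hchain₁
    hconn₂.isPreconnected hchain₂ hb₁ ha₁ hx hy hσx.symm hσy.symm
    (by simp only; linarith [hcx.2]) (by simp only; linarith [hyd.2])
  rw [uIcc_of_le (by simp only; linarith)] at hσz
  refine (of_le_of_le hγ₂ hγ₁ hz₂ hz₁ hc₂ ha₁ ?_ ?_).symm
  · exact hchain₂.le_of_fst_add_snd_le hc₂ hz₂ (by simp only; linarith [hσz.1])
  · exact hchain₁.le_of_fst_add_snd_le hz₁ ha₁ (by simp only; linarith [hσz.2])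

theorem of_crossing {a b c d v₀ v₁ : ℝ} (hv : v₀ ≤ v₁)
    (h₁ : MutuallyReachable S (a, v₁) (b, v₀)) (h₂ : MutuallyReachable S (c, v₀) (d, v₁))
    (hcb : c ≤ b) (had : a ≤ d) : MutuallyReachable S (a, v₁) (c, v₀) := by
  rcases hv.lt_or_eq with hv | rfl
  · exact of_crossing_of_lt hv h₁ h₂ hcb had
  obtain ⟨γ₁, hγ₁, ha₁, hb₁⟩ := h₁
  obtain ⟨γ₂, hγ₂, hc₂, hd₂⟩ := h₂
  rw [monotonicPath_iff] at hγ₁ hγ₂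
  rcases le_total a c with hac | hca
  · exact ⟨γ₁, monotonicPath_iff.2 hγ₁, ha₁,
      hγ₁.2.1.isPreconnected.mk_mem_of_isChain hγ₁.2.2 ha₁ hb₁ hac hcb⟩
  · exact ⟨γ₂, monotonicPath_iff.2 hγ₂,
      hγ₂.2.1.isPreconnected.mk_mem_of_isChain hγ₂.2.2 hc₂ hd₂ hca had, hc₂⟩

end MutuallyReachable

theorem top_bottom_mutually_reachable_iff_general (n : ℝ) (hn : 0 ≤ n) (Dε : Set (ℝ × ℝ))
    (rUp rDown : ℝ × ℝ → ℝ)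
    (hrUp : ∀ p : ℝ × ℝ, (∃ u : ℝ, MutuallyReachable Dε p (u, n)) →
      MutuallyReachable Dε p (rUp p, n) ∧
        ∀ u : ℝ, MutuallyReachable Dε p (u, n) → u ≤ rUp p)
    (hrDown : ∀ p : ℝ × ℝ, (∃ u : ℝ, MutuallyReachable Dε p (u, 0)) →
      MutuallyReachable Dε p (rDown p, 0) ∧
        ∀ u : ℝ, MutuallyReachable Dε p (u, 0) → u ≤ rDown p)
    (utop ubot : ℝ) :
    MutuallyReachable Dε (utop, n) (ubot, 0) ↔
      ((∃ u : ℝ, MutuallyReachable Dε (utop, n) (u, 0)) ∧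
       (∃ u : ℝ, MutuallyReachable Dε (ubot, 0) (u, n)) ∧
       utop ≤ rUp (ubot, 0) ∧ ubot ≤ rDown (utop, n)) := by
  constructor
  · intro h
    exact ⟨⟨ubot, h⟩, ⟨utop, h.symm⟩, (hrUp _ ⟨utop, h.symm⟩).2 utop h.symm,
      (hrDown _ ⟨ubot, h⟩).2 ubot h⟩
  · rintro ⟨hbot, htop, hup, hdown⟩
    exact MutuallyReachable.of_crossing hn (hrDown _ hbot).1 (hrUp _ htop).1 hdown hup

/-- Mutual reachability criterion between a top point and a bottom point, in
terms of the rightmost reachability functions `r↑` and `r↓`. -/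
theorem top_bottom_mutually_reachable_iff (m n : ℝ) (hm : 0 ≤ m) (hn : 0 ≤ n)
    (Dε : Set (ℝ × ℝ)) (hD : Dε ⊆ Icc ((0 : ℝ), (0 : ℝ)) (2 * m, n))
    (rUp rDown : ℝ × ℝ → ℝ)
    (hrUp : ∀ p : ℝ × ℝ, (∃ u : ℝ, MutuallyReachable Dε p (u, n)) →
      MutuallyReachable Dε p (rUp p, n) ∧
        ∀ u : ℝ, MutuallyReachable Dε p (u, n) → u ≤ rUp p)
    (hrDown : ∀ p : ℝ × ℝ, (∃ u : ℝ, MutuallyReachable Dε p (u, 0)) →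
      MutuallyReachable Dε p (rDown p, 0) ∧
        ∀ u : ℝ, MutuallyReachable Dε p (u, 0) → u ≤ rDown p)
    (utop ubot : ℝ) :
    MutuallyReachable Dε (utop, n) (ubot, 0) ↔
      ((∃ u : ℝ, MutuallyReachable Dε (utop, n) (u, 0)) ∧
       (∃ u : ℝ, MutuallyReachable Dε (ubot, 0) (u, n)) ∧
       utop ≤ rUp (ubot, 0) ∧ ubot ≤ rDown (utop, n)) :=
  top_bottom_mutually_reachable_iff_general n hn Dε rUp rDown hrUp hrDown utop ubot
end

section
/- (Deque-cut correctness, left cut.) Let Q be a finite list of triples (beg, val, end) of reals with beg ≤ end, sorted so that consecutive triples have non-decreasing, non-overlapping intervals [beg, end]. Cutting Q to the left of x (removing from the left all triples with end < x, then replacing the new leftmost triple (beg,val,end) with (x,val,end) if beg ≤ x < end) produces a list representing exactly the restriction to [x, ∞) of the piecewise function represented by Q, where a triple (beg,val,end) represents the function f(u) = val if val < end and f(u) = u if val = end, on domain [beg,end]. -/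
open Set

/-- The value represented by a triple `(beg, val, end)` at `u`: the constant
`val` if `val < end`, and the identity otherwise. -/
noncomputable def tripleFun (t : ℝ × ℝ × ℝ) (u : ℝ) : ℝ := if t.2.1 < t.2.2 then t.2.1 else u

/-- The graph of the piecewise partial function represented by a deque (list)
of triples. -/
def repSet (Q : List (ℝ × ℝ × ℝ)) : Set (ℝ × ℝ) :=
  {p : ℝ × ℝ | ∃ t ∈ Q, t.1 ≤ p.1 ∧ p.1 ≤ t.2.2 ∧ p.2 = tripleFun t p.1}

/-- Cutting a deque to the left of `x`: drop from the left all triples with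
`end < x`, then clip the new leftmost triple at `x` if it straddles `x`. -/
noncomputable def leftCut (x : ℝ) (Q : List (ℝ × ℝ × ℝ)) : List (ℝ × ℝ × ℝ) :=
  match Q.dropWhile (fun t => decide (t.2.2 < x)) with
  | [] => []
  | t :: rest => if t.1 ≤ x ∧ x < t.2.2 then (x, t.2.1, t.2.2) :: rest else t :: rest

/-! Induct on the list. A dropped triple ends before `x`, so its graph misses the half-plane
`x ≤ u`. At the first kept triple `t` we have `x < end t` because `end t ≠ x`, and sortedness
together with `beg ≤ end` puts every later triple to the right of `end t`; so only the graph of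
`t` can reach left of `x`, and clipping `t` at `x` removes exactly that part. -/

def tripleGraph (t : ℝ × ℝ × ℝ) : Set (ℝ × ℝ) :=
  {p | t.1 ≤ p.1 ∧ p.1 ≤ t.2.2 ∧ p.2 = tripleFun t p.1}

lemma repSet_nil : repSet [] = ∅ := by
  simp [repSet]

lemma repSet_cons (t : ℝ × ℝ × ℝ) (Q : List (ℝ × ℝ × ℝ)) :
    repSet (t :: Q) = tripleGraph t ∪ repSet Q := by
  ext p
  simp [repSet, tripleGraph]

lemma tripleGraph_inter_eq_empty {x : ℝ} {t : ℝ × ℝ × ℝ} (h : t.2.2 < x) :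
    tripleGraph t ∩ {p | x ≤ p.1} = ∅ :=
  eq_empty_of_forall_notMem fun _ ⟨⟨_, hle, _⟩, hx⟩ => (hle.trans_lt h).not_ge hx

lemma tripleGraph_subset_of_le_beg {x : ℝ} {t : ℝ × ℝ × ℝ} (h : x ≤ t.1) :
    tripleGraph t ⊆ {p | x ≤ p.1} :=
  fun _ ⟨hbeg, _⟩ => h.trans hbeg

lemma repSet_subset_of_le_beg {x : ℝ} {Q : List (ℝ × ℝ × ℝ)} (h : ∀ t ∈ Q, x ≤ t.1) :
    repSet Q ⊆ {p | x ≤ p.1} :=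
  fun _ ⟨t, ht, hp⟩ => tripleGraph_subset_of_le_beg (h t ht) hp

lemma tripleGraph_clip {x : ℝ} {t : ℝ × ℝ × ℝ} (h : t.1 ≤ x) :
    tripleGraph (x, t.2.1, t.2.2) = tripleGraph t ∩ {p | x ≤ p.1} := by
  ext p
  simp only [tripleGraph, tripleFun, mem_inter_iff, mem_ofPred_eq]
  exact ⟨fun ⟨hx, hend, hval⟩ => ⟨⟨h.trans hx, hend, hval⟩, hx⟩,
    fun ⟨⟨_, hend, hval⟩, hx⟩ => ⟨hx, hend, hval⟩⟩

lemma end_le_beg_of_isChain {t : ℝ × ℝ × ℝ} {Q : List (ℝ × ℝ × ℝ)}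
    (hwf : ∀ s ∈ Q, s.1 ≤ s.2.2) (hsorted : (t :: Q).IsChain (fun s t => s.2.2 ≤ t.1)) :
    ∀ s ∈ Q, t.2.2 ≤ s.1 := by
  induction Q generalizing t with
  | nil => simp
  | cons a Q ih =>
    obtain ⟨hta, hsorted⟩ := List.isChain_cons_cons.mp hsorted
    rintro s (_ | ⟨_, hs⟩)
    · exact hta
    · exact hta.trans <| (hwf a (by simp)).trans <|
        ih (fun s hs => hwf s (by simp [hs])) hsorted s hs

lemma leftCut_cons_of_lt {x : ℝ} {t : ℝ × ℝ × ℝ} (Q : List (ℝ × ℝ × ℝ)) (h : t.2.2 < x) :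
    leftCut x (t :: Q) = leftCut x Q := by
  simp [leftCut, h]

lemma leftCut_cons_of_le {x : ℝ} {t : ℝ × ℝ × ℝ} (Q : List (ℝ × ℝ × ℝ)) (h : x ≤ t.2.2) :
    leftCut x (t :: Q) =
      if t.1 ≤ x ∧ x < t.2.2 then (x, t.2.1, t.2.2) :: Q else t :: Q := by
  simp [leftCut, h.not_gt]

/-- Correctness of the left cut: for a well-formed sorted deque none of whose
right endpoints equals `x`, the cut deque represents exactly the restriction of
the represented function to `[x, ∞)`. -/
theorem leftCut_correct (x : ℝ) (Q : List (ℝ × ℝ × ℝ))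
    (hwf : ∀ t ∈ Q, t.1 ≤ t.2.2)
    (hsorted : Q.Chain' (fun s t => s.2.2 ≤ t.1))
    (hx : ∀ t ∈ Q, t.2.2 ≠ x) :
    repSet (leftCut x Q) = repSet Q ∩ {p : ℝ × ℝ | x ≤ p.1} := by
  induction Q with
  | nil => simp [leftCut, repSet_nil]
  | cons t Q ih =>
    have hwf' : ∀ s ∈ Q, s.1 ≤ s.2.2 := fun s hs => hwf s (.tail _ hs)
    rw [repSet_cons, union_inter_distrib_right]
    rcases lt_or_ge t.2.2 x with hlt | hle
    · rw [leftCut_cons_of_lt Q hlt, tripleGraph_inter_eq_empty hlt, empty_union,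
        ih hwf' hsorted.tail fun s hs => hx s (.tail _ hs)]
    have hxt : x < t.2.2 := hle.lt_of_ne (hx t (.head _)).symm
    have hrest : repSet Q ∩ {p | x ≤ p.1} = repSet Q := inter_eq_left.2 <|
      repSet_subset_of_le_beg fun s hs => hxt.le.trans (end_le_beg_of_isChain hwf' hsorted s hs)
    rw [leftCut_cons_of_le Q hle, hrest]
    by_cases hb : t.1 ≤ x
    · rw [if_pos ⟨hb, hxt⟩, repSet_cons, tripleGraph_clip hb]
    · rw [if_neg fun h => hb h.1, repSet_cons,
        inter_eq_left.2 (tripleGraph_subset_of_le_beg (le_of_not_ge hb))]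
end
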